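/- arXiv:2004.09090 — 5 statements merged into one kernel-verified Lean document; each statement's English description precedes it below -/
import Mathlib

section
/- Every finite simple graph G admits an edge labelling ℓ : E(G) → {1,2,3} such that for every integer x ≥ 1 the subgraph of G induced by the set S_x is a forest (contains no cycle). -/
/-!
Fix a linear order on the vertices, and give each vertex the level `⌊(ν₂ ρ - ν₃ ρ) / 2⌋` of
its product `ρ`. Vertices are processed in increasing order. When `w` is processed all its
edges are still labelled `1`; we relabel the edges from `w` to a set `D` of earlier neighbours
that all have even balance `ν₂ ρ - ν₃ ρ` (with `2`) or all have odd balance (with `3`). This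
leaves their levels unchanged and gives `w` the balance `#D` or `-#D`. If `p` and `q` earlier
neighbours have even and odd balance, the balances achievable at `w` fill `[-q, p]`, whose
levels are more than `(p + q) / 2` values, so by pigeonhole one of them is shared by at most
one earlier neighbour of `w`. In the end each vertex has at most one smaller neighbour of its
own level, and equal products force equal levels; so the largest vertex of a cycle inside
some `S_x` would have two smaller neighbours on the cycle.
-/

open Finset

/-- The product of the labels assigned by `ℓ` to the edges incident to `v`
(an empty product equals `1`). -/
def vertexProd {V : Type*} [Fintype V] [DecidableEq V] (G : SimpleGraph V)
    [DecidableRel G.Adj] (ℓ : Sym2 V → ℕ) (v : V) : ℕ :=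
  ∏ e ∈ G.incidenceFinset v, ℓ e

theorem SimpleGraph.isAcyclic_of_subsingleton_lower_neighbors {α β : Type*} [LinearOrder β]
    {H : SimpleGraph α} (f : α → β) (hf : Function.Injective f)
    (h : ∀ v, {u | H.Adj v u ∧ f u < f v}.Subsingleton) : H.IsAcyclic := by
  classical
  intro v₀ c hc
  obtain ⟨z, hz, hmax⟩ := c.support.toFinset.exists_max_image f ⟨v₀, by simp⟩
  rw [List.mem_toFinset] at hz
  have hc' : (c.rotate z hz).IsCycle := hc.rotate hz
  have lower : ∀ u ∈ (c.rotate z hz).support, u ≠ z → f u < f z := fun u hu hne =>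
    (hmax u (by simpa using hu)).lt_of_ne (hf.ne hne)
  have hsnd := (c.rotate z hz).adj_snd hc'.not_nil
  have hpen := (c.rotate z hz).adj_penultimate hc'.not_nil
  exact hc'.snd_ne_penultimate <| h z
    ⟨hsnd, lower _ (Walk.getVert_mem_support _ _) hsnd.ne'⟩
    ⟨hpen.symm, lower _ (Walk.getVert_mem_support _ _) hpen.ne⟩

def balance (n : ℕ) : ℤ := n.factorization 2 - n.factorization 3

lemma balance_one : balance 1 = 0 := by simp [balance]

lemma balance_two : balance 2 = 1 := by
  simp [balance, Nat.prime_two.factorization_self, Nat.factorization_eq_zero_of_not_dvd]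

lemma balance_three : balance 3 = -1 := by
  simp [balance, Nat.prime_three.factorization_self, Nat.factorization_eq_zero_of_not_dvd]

lemma balance_prod {ι : Type*} {S : Finset ι} {g : ι → ℕ} (hg : ∀ i ∈ S, g i ≠ 0) :
    balance (∏ i ∈ S, g i) = ∑ i ∈ S, balance (g i) := by
  simp [balance, Nat.factorization_prod hg, Finsupp.finsetSum_apply, sum_sub_distrib]

/-- The halves of `t ∈ [-N, P]` fill `Icc (-N / 2) (P / 2)`, which has more than `#B / 2`
elements. -/
lemma exists_half_fiber_card_le_one {ι : Type*} (B : Finset ι) (g : ι → ℤ) {P N : ℕ}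
    (hB : #B ≤ P + N) : ∃ t : ℤ, -N ≤ t ∧ t ≤ P ∧ #{u ∈ B | g u = t / 2} ≤ 1 := by
  obtain ⟨y, hy, hfiber⟩ := exists_card_fiber_lt_of_card_lt_mul (s := B) (f := g) (n := 2)
    (t := Icc (-(N : ℤ) / 2) ((P : ℤ) / 2)) (by rw [Int.card_Icc]; omega)
  rw [mem_Icc] at hy
  have hy' : max (2 * y) (-N) / 2 = y := by omega
  exact ⟨max (2 * y) (-N), by omega, by omega, by rw [hy']; omega⟩

lemma exists_subset_card_mul_balance {ι : Type*} (B : Finset ι) (b : ι → ℤ) {t : ℤ}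
    (ht₁ : -#{u ∈ B | ¬b u % 2 = 0} ≤ t) (ht₂ : t ≤ #{u ∈ B | b u % 2 = 0}) :
    ∃ D ⊆ B, ∃ c ∈ ({2, 3} : Set ℕ), #D * balance c = t ∧
      ∀ u ∈ D, (b u + balance c) / 2 = b u / 2 := by
  rcases le_or_gt 0 t with ht | ht
  · obtain ⟨D, hD, hcard⟩ := exists_subset_card_eq
      (show t.toNat ≤ #{u ∈ B | b u % 2 = 0} by omega)
    refine ⟨D, hD.trans (filter_subset _ _), 2, by simp, by rw [balance_two]; omega,
      fun u hu => ?_⟩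
    have := (mem_filter.mp (hD hu)).2
    rw [balance_two]; omega
  · obtain ⟨D, hD, hcard⟩ := exists_subset_card_eq
      (show (-t).toNat ≤ #{u ∈ B | ¬b u % 2 = 0} by omega)
    refine ⟨D, hD.trans (filter_subset _ _), 3, by simp, by rw [balance_three]; omega,
      fun u hu => ?_⟩
    have := (mem_filter.mp (hD hu)).2
    rw [balance_three]; omega

namespace SimpleGraph

variable {V : Type*} [Fintype V] [DecidableEq V] (G : SimpleGraph V) [DecidableRel G.Adj]

/-- `Int` division by `2` rounds down, so the balances `2k` and `2k + 1` share a level. -/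
def level (ℓ : Sym2 V → ℕ) (v : V) : ℤ := balance (vertexProd G ℓ v) / 2

lemma balance_vertexProd_piecewise {ℓ : Sym2 V → ℕ} (hℓ : ∀ e, ℓ e ≠ 0) {c : ℕ}
    (hc : c ≠ 0) {F : Finset (Sym2 V)} (hF : ∀ e ∈ F, ℓ e = 1) (v : V) :
    balance (vertexProd G (F.piecewise (fun _ => c) ℓ) v) =
      balance (vertexProd G ℓ v) + #{e ∈ G.incidenceFinset v | e ∈ F} * balance c := by
  have hF' : ∀ e, balance (F.piecewise (fun _ => c) ℓ e) =
      balance (ℓ e) + if e ∈ F then balance c else 0 := fun e => by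
    by_cases he : e ∈ F <;> simp [he, hF, balance_one]
  unfold vertexProd
  rw [balance_prod fun e _ => by by_cases he : e ∈ F <;> simp [he, hc, hℓ],
    balance_prod fun e _ => hℓ e]
  simp only [hF', sum_add_distrib, ← sum_filter, sum_const, nsmul_eq_mul]

lemma card_incidenceFinset_filter_mem_image {w : V} {D : Finset V}
    (hD : D ⊆ G.neighborFinset w) (v : V) :
    #{e ∈ G.incidenceFinset v | e ∈ D.image (s(w, ·))} = #{u ∈ D | v = w ∨ v = u} := by
  have : {e ∈ G.incidenceFinset v | e ∈ D.image (s(w, ·))} =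
      {u ∈ D | v = w ∨ v = u}.image (s(w, ·)) := by
    ext e
    simp only [mem_filter, mem_image, mem_incidenceFinset, incidenceSet, Set.mem_ofPred_eq]
    constructor
    · rintro ⟨⟨-, hv⟩, u, hu, rfl⟩
      exact ⟨u, ⟨hu, Sym2.mem_iff.mp hv⟩, rfl⟩
    · rintro ⟨u, ⟨hu, hv⟩, rfl⟩
      exact ⟨⟨(mem_neighborFinset _ _ _).mp (hD hu), Sym2.mem_iff.mpr hv⟩, u, hu, rfl⟩
  rw [this, card_image_of_injective _ fun _ _ => Sym2.congr_right.mp]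

variable {β : Type*} [LinearOrder β] (f : V → β)

structure IsGreedyLabelling (s : Finset V) (ℓ : Sym2 V → ℕ) : Prop where
  mem_labels : ∀ e, ℓ e ∈ ({1, 2, 3} : Set ℕ)
  eq_one_of_notMem : ∀ v ∉ s, ∀ e ∈ G.incidenceFinset v, ℓ e = 1
  card_lower_le_one : ∀ v ∈ s,
    #{u ∈ s | G.Adj v u ∧ f u < f v ∧ G.level ℓ u = G.level ℓ v} ≤ 1

variable {G f}

lemma IsGreedyLabelling.ne_zero {s : Finset V} {ℓ : Sym2 V → ℕ}
    (hℓ : IsGreedyLabelling G f s ℓ) (e : Sym2 V) : ℓ e ≠ 0 := by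
  have := hℓ.mem_labels e
  simp only [Set.mem_insert_iff, Set.mem_singleton_iff] at this
  omega

lemma IsGreedyLabelling.exists_insert {s : Finset V} {ℓ : Sym2 V → ℕ}
    (hℓ : IsGreedyLabelling G f s ℓ) {w : V} (hw : w ∉ s) (hmax : ∀ x ∈ s, f x ≤ f w) :
    ∃ ℓ', IsGreedyLabelling G f (insert w s) ℓ' := by
  set b : V → ℤ := fun u => balance (vertexProd G ℓ u)
  set B := {u ∈ s | G.Adj w u}
  obtain ⟨t, ht₁, ht₂, hfiber⟩ := exists_half_fiber_card_le_one B (G.level ℓ)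
    (card_filter_add_card_filter_not (fun u => b u % 2 = 0)).ge
  obtain ⟨D, hDB, c, hc, hDt, hDlevel⟩ := exists_subset_card_mul_balance B b ht₁ ht₂
  have hDs : D ⊆ s := hDB.trans (filter_subset _ _)
  have hDw : D ⊆ G.neighborFinset w := fun u hu =>
    (mem_neighborFinset _ _ _).mpr (mem_filter.mp (hDB hu)).2
  have hone : ∀ e ∈ D.image (s(w, ·)), ℓ e = 1 := by
    rintro _ h
    obtain ⟨u, hu, rfl⟩ := mem_image.mp h
    refine hℓ.eq_one_of_notMem w hw _ ((mem_incidenceFinset _ _ _).mpr ⟨?_, by simp⟩)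
    exact (mem_neighborFinset _ _ _).mp (hDw hu)
  have hc0 : c ≠ 0 := by rcases hc with rfl | rfl <;> norm_num
  set ℓ' := (D.image (s(w, ·))).piecewise (fun _ => c) ℓ with hℓ'
  have hbal (v : V) :
      balance (vertexProd G ℓ' v) = b v + #{u ∈ D | v = w ∨ v = u} * balance c := by
    rw [balance_vertexProd_piecewise G hℓ.ne_zero hc0 hone,
      card_incidenceFinset_filter_mem_image G hDw]
  have level_of_ne (v : V) (hv : v ≠ w) : G.level ℓ' v = G.level ℓ v := by
    unfold level
    rw [hbal, filter_or, filter_false_of_mem fun _ _ => hv, empty_union, filter_eq]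
    by_cases hvD : v ∈ D
    · simpa [hvD] using hDlevel v hvD
    · simp [hvD, b]
  have level_self : G.level ℓ' w = t / 2 := by
    unfold level
    have hbw : b w = 0 := by
      simp only [b]; rw [vertexProd, prod_eq_one (hℓ.eq_one_of_notMem w hw), balance_one]
    rw [hbal, hbw, filter_true_of_mem fun _ _ => Or.inl rfl, hDt, zero_add]
  refine ⟨ℓ', ?_, ?_, ?_⟩
  · intro e
    by_cases he : e ∈ D.image (s(w, ·))
    · rw [hℓ', piecewise_eq_of_mem _ _ _ he]; rcases hc with rfl | rfl <;> simp
    · rw [hℓ', piecewise_eq_of_notMem _ _ _ he]; exact hℓ.mem_labels e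
  · intro v hv e he
    rw [mem_insert, not_or] at hv
    rw [hℓ', piecewise_eq_of_notMem]
    · exact hℓ.eq_one_of_notMem v hv.2 e he
    · rintro h
      obtain ⟨u, hu, rfl⟩ := mem_image.mp h
      rcases Sym2.mem_iff.mp ((mem_incidenceFinset _ _ _).mp he).2 with rfl | rfl
      exacts [hv.1 rfl, hv.2 (hDs hu)]
  · intro v hv
    rcases mem_insert.mp hv with rfl | hvs
    · refine (card_le_card fun u hu => ?_).trans hfiber
      obtain ⟨hu, hadj, -, hlevel⟩ := mem_filter.mp hu
      have huw : u ≠ v := hadj.ne'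
      rw [level_of_ne u huw, level_self] at hlevel
      exact mem_filter.mpr
        ⟨mem_filter.mpr ⟨(mem_insert.mp hu).resolve_left huw, hadj⟩, hlevel⟩
    · refine (card_le_card fun u hu => ?_).trans (hℓ.card_lower_le_one v hvs)
      obtain ⟨hu, hadj, hlt, hlevel⟩ := mem_filter.mp hu
      have huw : u ≠ w := by rintro rfl; exact (hlt.trans_le (hmax v hvs)).false
      rw [level_of_ne u huw, level_of_ne v (ne_of_mem_of_not_mem hvs hw)] at hlevel
      exact mem_filter.mpr ⟨(mem_insert.mp hu).resolve_left huw, hadj, hlt, hlevel⟩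

variable (G f) in
lemma exists_isGreedyLabelling (s : Finset V) : ∃ ℓ, IsGreedyLabelling G f s ℓ := by
  induction s using Finset.induction_on_max_value f with
  | empty => exact ⟨fun _ => 1, fun _ => by simp, fun _ _ _ _ => rfl, by simp⟩
  | insert w s hw hmax ih =>
    obtain ⟨ℓ, hℓ⟩ := ih
    exact hℓ.exists_insert hw hmax

lemma IsGreedyLabelling.isAcyclic_induce {ℓ : Sym2 V → ℕ}
    (hℓ : IsGreedyLabelling G f univ ℓ) (hf : Function.Injective f) (x : ℕ) :
    (G.induce {v | vertexProd G ℓ v = x}).IsAcyclic := by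
  refine isAcyclic_of_subsingleton_lower_neighbors (f ∘ Subtype.val)
    (hf.comp Subtype.val_injective) fun v a ha b hb => Subtype.ext ?_
  have mem (u : {v | vertexProd G ℓ v = x})
      (hu : (G.induce {v | vertexProd G ℓ v = x}).Adj v u ∧ f u < f v) :
      (u : V) ∈ {u ∈ (univ : Finset V) |
        G.Adj v u ∧ f u < f v ∧ G.level ℓ u = G.level ℓ v} := by
    refine mem_filter.mpr ⟨mem_univ _, hu.1, hu.2, ?_⟩
    unfold level
    rw [u.2.out, v.2.out]
  exact card_le_one.mp (hℓ.card_lower_le_one v (mem_univ _)) _ (mem a ha) _ (mem b hb)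

end SimpleGraph

/-- Every finite simple graph `G` admits a `3`-labelling of its edges such that for
every `x ≥ 1` the subgraph of `G` induced by `S_x = {v | ρ(v) = x}` is a forest. -/
theorem stmt_2 {V : Type*} [Fintype V] [DecidableEq V] (G : SimpleGraph V)
    [DecidableRel G.Adj] :
    ∃ ℓ : Sym2 V → ℕ,
      (∀ e ∈ G.edgeSet, ℓ e ∈ ({1, 2, 3} : Set ℕ)) ∧
      ∀ x : ℕ, 1 ≤ x →
        (G.induce {v : V | vertexProd G ℓ v = x}).IsAcyclic := by
  obtain ⟨ℓ, hℓ⟩ := G.exists_isGreedyLabelling (Fintype.equivFin V) univ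
  exact ⟨ℓ, fun e _ => hℓ.mem_labels e,
    fun x _ => hℓ.isAcyclic_induce (Fintype.equivFin V).injective x⟩
end

section
/- Every finite simple graph G admits a total labelling, assigning to each edge a label in {1,2,3} and to each vertex a label in {1,2}, such that for every edge uv of G the quantity ρ^t(u) differs from ρ^t(v), where for a vertex w, ρ^t(w) is the product of the label of w itself with the labels of all edges incident to w. -/
/-!
Shift all labels down by one, so that edges get `0, 1, 2` and vertices `0, 1`. The map
`ν₂ + 2 ν₃` sends the labels `1, 2, 3` to `0, 1, 2` and products to sums, so it suffices to make
the additive weights (vertex label plus incident edge labels) proper. This is done by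
Kalkowski's algorithm: vertices are processed one at a time, and all edges at unprocessed
vertices keep the label `1`. A processed neighbour `u` of the new vertex `a` can move the edge
`au` up (if its own label is `1`) or down (if it is `0`) and switch its own label, keeping its
weight. Together with its own label, `a` can therefore reach `#N + 2` consecutive weights, where
`N` is its set of processed neighbours, and one of them avoids the `#N` weights of `N`.
-/

open Finset

open SimpleGraph Function

namespace TotalLabelling

lemma sum_update_add_of_mem {ι : Type*} [DecidableEq ι] {s : Finset ι} {i : ι} (hi : i ∈ s)
    (f : ι → ℕ) (c : ℕ) : ∑ x ∈ s, update f i c x + f i = ∑ x ∈ s, f x + c := by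
  rw [sum_update_of_mem hi, ← sum_erase_add s f hi, sdiff_singleton_eq_erase]
  ring

lemma exists_add_sub_add_notMem (S : Finset ℕ) {d p n : ℕ} (hn : n ≤ d) (hS : #S ≤ p + n) :
    ∃ tp ≤ p, ∃ tn ≤ n, ∃ c ≤ 1, d + tp - tn + c ∉ S := by
  obtain ⟨m, hm, hmS⟩ : ∃ m ∈ Icc (d - n) (d + p + 1), m ∉ S :=
    exists_mem_notMem_of_card_lt_card (by rw [Nat.card_Icc]; omega)
  suffices ∃ tp ≤ p, ∃ tn ≤ n, ∃ c ≤ 1, d + tp - tn + c = m by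
    obtain ⟨tp, htp, tn, htn, c, hc, rfl⟩ := this
    exact ⟨tp, htp, tn, htn, c, hc, hmS⟩
  rw [mem_Icc] at hm
  rcases le_or_gt m d with hmd | hmd
  · exact ⟨0, by omega, d - m, by omega, 0, zero_le_one, by omega⟩
  rcases le_or_gt m (d + p) with hmp | hmp
  · exact ⟨m - d, by omega, 0, by omega, 0, zero_le_one, by omega⟩
  · exact ⟨p, le_rfl, 0, by omega, 1, le_rfl, by omega⟩

variable {V : Type*} [Fintype V] [DecidableEq V] (G : SimpleGraph V) [DecidableRel G.Adj]

def weight (f : Sym2 V → ℕ) (o : V → ℕ) (v : V) : ℕ := ∑ e ∈ G.incidenceFinset v, f e + o v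

variable {G}

lemma mk_mem_incidenceFinset_iff {a u x : V} :
    s(a, u) ∈ G.incidenceFinset x ↔ G.Adj a u ∧ (x = a ∨ x = u) := by
  simp [mk'_mem_incidenceSet_iff]

lemma weight_flip_of_ne {f : Sym2 V → ℕ} {o : V → ℕ} {a u x : V} (hadj : G.Adj a u)
    (hf : f s(a, u) = 1) (ho : o u ≤ 1) (hx : x ≠ a) :
    weight G (update f s(a, u) (2 * o u)) (update o u (1 - o u)) x = weight G f o x := by
  unfold weight
  by_cases hxu : x = u
  · subst hxu
    have := sum_update_add_of_mem (mk_mem_incidenceFinset_iff.2 ⟨hadj, Or.inr rfl⟩) f (2 * o x)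
    rw [update_self]
    omega
  · have he : s(a, u) ∉ G.incidenceFinset x := by rw [mk_mem_incidenceFinset_iff]; tauto
    rw [sum_update_of_notMem he, update_of_ne hxu]

lemma sum_flip_self {f : Sym2 V → ℕ} {o : V → ℕ} {a u : V} (hadj : G.Adj a u)
    (hf : f s(a, u) = 1) :
    ∑ e ∈ G.incidenceFinset a, update f s(a, u) (2 * o u) e + 1 =
      ∑ e ∈ G.incidenceFinset a, f e + 2 * o u := by
  rw [← hf]
  exact sum_update_add_of_mem (mk_mem_incidenceFinset_iff.2 ⟨hadj, Or.inl rfl⟩) f _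

lemma exists_flip (a : V) (T : Finset V) (f : Sym2 V → ℕ) (o : V → ℕ) (hf : ∀ e, f e ≤ 2)
    (ho : ∀ v, o v ≤ 1) (hT : ∀ u ∈ T, G.Adj a u ∧ f s(a, u) = 1) :
    ∃ f' o', (∀ e, f' e ≤ 2) ∧ (∀ v, o' v ≤ 1) ∧
      (∀ e, (∀ u ∈ T, e ≠ s(a, u)) → f' e = f e) ∧
      (∀ x ≠ a, weight G f' o' x = weight G f o x) ∧
      ∑ e ∈ G.incidenceFinset a, f' e + #T =
        ∑ e ∈ G.incidenceFinset a, f e + 2 * ∑ u ∈ T, o u := by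
  induction T using Finset.induction_on generalizing f o with
  | empty => exact ⟨f, o, hf, ho, fun _ _ => rfl, fun _ _ => rfl, by simp⟩
  | @insert u T hu ih =>
    obtain ⟨hadj, hfu⟩ := hT u (mem_insert_self u T)
    have hne : ∀ v ∈ T, s(a, v) ≠ s(a, u) := fun v hv h =>
      hu (by rwa [← Sym2.congr_right.1 h])
    obtain ⟨f', o', hf', ho', hfe, hw, hsum⟩ :=
      ih (update f s(a, u) (2 * o u)) (update o u (1 - o u))
        (fun e => by rw [update_apply]; split_ifs <;> grind)
        (fun v => by rw [update_apply]; split_ifs <;> grind)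
        (fun v hv => ⟨(hT v (mem_insert_of_mem hv)).1,
          by rw [update_of_ne (hne v hv)]; exact (hT v (mem_insert_of_mem hv)).2⟩)
    refine ⟨f', o', hf', ho', fun e he => ?_, fun x hx => ?_, ?_⟩
    · rw [hfe e fun v hv => he v (mem_insert_of_mem hv),
        update_of_ne (he u (mem_insert_self u T))]
    · rw [hw x hx, weight_flip_of_ne hadj hfu (ho u) hx]
    · have hT' : ∑ v ∈ T, update o u (1 - o u) v = ∑ v ∈ T, o v :=
        sum_congr rfl fun v hv => update_of_ne (ne_of_mem_of_not_mem hv hu) _ _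
      have := sum_flip_self (o := o) hadj hfu
      rw [card_insert_of_notMem hu, sum_insert hu]
      omega

variable (G) in
/-- `f` and `o` are the edge and vertex labels shifted down by one, and `P` is the set of
vertices processed so far. -/
structure IsPartialLabelling (P : Finset V) (f : Sym2 V → ℕ) (o : V → ℕ) : Prop where
  edge_le_two : ∀ e, f e ≤ 2
  vertex_le_one : ∀ v, o v ≤ 1
  edge_eq_one : ∀ x ∉ P, ∀ e ∈ G.incidenceSet x, f e = 1
  weight_ne : ∀ u ∈ P, ∀ v ∈ P, G.Adj u v → weight G f o u ≠ weight G f o v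

namespace IsPartialLabelling

variable {P : Finset V} {f : Sym2 V → ℕ} {o : V → ℕ}

lemma sum_incidenceFinset_eq_degree (h : IsPartialLabelling G P f o) {a : V} (ha : a ∉ P) :
    ∑ e ∈ G.incidenceFinset a, f e = G.degree a := by
  rw [← card_incidenceFinset_eq_degree, card_eq_sum_ones]
  exact sum_congr rfl fun e he => h.edge_eq_one a ha e (by simpa using he)

lemma exists_relabel (h : IsPartialLabelling G P f o) {a : V} (ha : a ∉ P) {T : Finset V}
    (hT : T ⊆ {u ∈ G.neighborFinset a | u ∈ P}) {c : ℕ} (hc : c ≤ 1) :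
    ∃ f' o', (∀ e, f' e ≤ 2) ∧ (∀ v, o' v ≤ 1) ∧
      (∀ x ∉ insert a P, ∀ e ∈ G.incidenceSet x, f' e = 1) ∧
      (∀ x ≠ a, weight G f' o' x = weight G f o x) ∧
      weight G f' o' a + #T = G.degree a + 2 * ∑ u ∈ T, o u + c := by
  obtain ⟨f', o', hf', ho', hfe, hw, hsa⟩ := exists_flip a T f o h.edge_le_two
    h.vertex_le_one fun u hu => by
      obtain ⟨hua, -⟩ := mem_filter.1 (hT hu)
      rw [mem_neighborFinset] at hua
      exact ⟨hua, h.edge_eq_one a ha _ ((mk'_mem_incidenceSet_iff G).2 ⟨hua, Or.inl rfl⟩)⟩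
  refine ⟨f', update o' a c, hf', fun v => ?_, fun x hx e he => ?_, fun x hx => ?_, ?_⟩
  · rw [update_apply]; split_ifs <;> grind
  · obtain ⟨hxa, hxP⟩ := not_or.1 ((not_congr mem_insert).1 hx)
    rw [hfe e fun u hu heu => ?_]
    · exact h.edge_eq_one x hxP e he
    · have hxe : x ∈ s(a, u) := heu ▸ he.2
      rcases Sym2.mem_iff.1 hxe with rfl | rfl
      · exact hxa rfl
      · exact hxP (mem_filter.1 (hT hu)).2
  · rw [← hw x hx, weight, weight, update_of_ne hx]
  · rw [h.sum_incidenceFinset_eq_degree ha] at hsa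
    rw [weight, update_self]
    omega

lemma exists_insert (h : IsPartialLabelling G P f o) {a : V} (ha : a ∉ P) :
    ∃ f' o', IsPartialLabelling G (insert a P) f' o' := by
  set N := {u ∈ G.neighborFinset a | u ∈ P}
  have hNeg : #{u ∈ N | o u ≠ 1} ≤ G.degree a :=
    (card_le_card (filter_subset _ _)).trans (card_le_card (filter_subset _ _))
  have hS : #(N.image (weight G f o)) ≤ #{u ∈ N | o u = 1} + #{u ∈ N | o u ≠ 1} :=
    card_image_le.trans (card_filter_add_card_filter_not _).ge
  obtain ⟨tp, htp, tn, htn, c, hc, hm⟩ := exists_add_sub_add_notMem _ hNeg hS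
  obtain ⟨Tp, hTp, rfl⟩ := exists_subset_card_eq htp
  obtain ⟨Tn, hTn, rfl⟩ := exists_subset_card_eq htn
  have hdisj : Disjoint Tp Tn := disjoint_left.2 fun u hp hn =>
    (mem_filter.1 (hTn hn)).2 (mem_filter.1 (hTp hp)).2
  have hsum : ∑ u ∈ Tp ∪ Tn, o u = #Tp := by
    have hp : ∑ u ∈ Tp, o u = #Tp := by
      rw [card_eq_sum_ones]
      exact sum_congr rfl fun u hu => (mem_filter.1 (hTp hu)).2
    have hn : ∑ u ∈ Tn, o u = 0 := sum_eq_zero fun u hu => by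
      have := h.vertex_le_one u; have := (mem_filter.1 (hTn hu)).2; omega
    rw [sum_union hdisj, hp, hn, add_zero]
  obtain ⟨f', o', hf', ho', hfe, hw, hwa⟩ := h.exists_relabel ha
    (union_subset (hTp.trans (filter_subset _ _)) (hTn.trans (filter_subset _ _))) hc
  rw [card_union_of_disjoint hdisj, hsum] at hwa
  have hwa_ne : ∀ v ∈ P, G.Adj a v → weight G f' o' a ≠ weight G f' o' v := by
    intro v hv hav heq
    rw [hw v (ne_of_mem_of_not_mem hv ha)] at heq
    refine hm (mem_image.2 ⟨v, mem_filter.2 ⟨(mem_neighborFinset G a v).2 hav, hv⟩, ?_⟩)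
    omega
  refine ⟨f', o', hf', ho', hfe, fun u hu v hv huv => ?_⟩
  rcases mem_insert.1 hu with rfl | huP <;> rcases mem_insert.1 hv with rfl | hvP
  · exact (G.irrefl huv).elim
  · exact hwa_ne v hvP huv
  · exact (hwa_ne u huP huv.symm).symm
  · rw [hw u (ne_of_mem_of_not_mem huP ha), hw v (ne_of_mem_of_not_mem hvP ha)]
    exact h.weight_ne u huP v hvP huv

end IsPartialLabelling

lemma exists_isPartialLabelling (P : Finset V) : ∃ f o, IsPartialLabelling G P f o := by
  induction P using Finset.induction_on with
  | empty => exact ⟨1, 0, fun _ => one_le_two, fun _ => zero_le_one, fun _ _ _ _ => rfl,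
      fun _ hu => absurd hu (notMem_empty _)⟩
  | @insert a P ha ih =>
    obtain ⟨f, o, h⟩ := ih
    exact h.exists_insert ha

def logWeight (n : ℕ) : ℕ := n.factorization 2 + 2 * n.factorization 3

lemma logWeight_prod {ι : Type*} (s : Finset ι) (g : ι → ℕ) (hg : ∀ i ∈ s, g i ≠ 0) :
    logWeight (∏ i ∈ s, g i) = ∑ i ∈ s, logWeight (g i) := by
  simp only [logWeight, Nat.factorization_prod hg, Finsupp.coe_finsetSum, Finset.sum_apply,
    sum_add_distrib, mul_sum]

lemma logWeight_mul {m n : ℕ} (hm : m ≠ 0) (hn : n ≠ 0) :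
    logWeight (m * n) = logWeight m + logWeight n := by
  simp only [logWeight, Nat.factorization_mul hm hn, Finsupp.add_apply]
  ring

lemma logWeight_add_one {x : ℕ} (hx : x ≤ 2) : logWeight (x + 1) = x := by
  interval_cases x <;> simp [logWeight, Nat.prime_two.factorization_self,
    Nat.prime_three.factorization_self, Nat.factorization_eq_zero_of_not_dvd]

lemma logWeight_mul_vertexProd {f : Sym2 V → ℕ} {o : V → ℕ} (hf : ∀ e, f e ≤ 2) (v : V)
    (ho : o v ≤ 1) :
    logWeight ((o v + 1) * vertexProd G (fun e => f e + 1) v) = weight G f o v := by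
  rw [vertexProd, logWeight_mul (by omega) (prod_ne_zero_iff.2 fun e _ => by omega),
    logWeight_prod _ _ fun e _ => by omega, logWeight_add_one (by omega), weight, add_comm]
  exact congrArg (· + o v) (sum_congr rfl fun e _ => logWeight_add_one (hf e))

end TotalLabelling

/-- Every finite simple graph `G` admits a p-proper total labelling assigning labels
in `{1,2,3}` to the edges and labels in `{1,2}` to the vertices: for every edge `uv`,
the product `ρᵗ(u)` of the label of `u` with the labels of the edges incident to `u`
differs from `ρᵗ(v)`. -/
theorem stmt_3 {V : Type*} [Fintype V] [DecidableEq V] (G : SimpleGraph V)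
    [DecidableRel G.Adj] :
    ∃ (ℓe : Sym2 V → ℕ) (ℓv : V → ℕ),
      (∀ e ∈ G.edgeSet, ℓe e ∈ ({1, 2, 3} : Set ℕ)) ∧
      (∀ v : V, ℓv v ∈ ({1, 2} : Set ℕ)) ∧
      ∀ u v : V, G.Adj u v →
        ℓv u * vertexProd G ℓe u ≠ ℓv v * vertexProd G ℓe v := by
  obtain ⟨f, o, h⟩ := TotalLabelling.exists_isPartialLabelling (G := G) univ
  refine ⟨fun e => f e + 1, fun v => o v + 1, fun e _ => ?_, fun v => ?_, fun u v huv heq => ?_⟩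
  · have := h.edge_le_two e
    simp only [Set.mem_insert_iff, Set.mem_singleton_iff]
    omega
  · have := h.vertex_le_one v
    simp only [Set.mem_insert_iff, Set.mem_singleton_iff]
    omega
  · apply h.weight_ne u (mem_univ u) v (mem_univ v) huv
    rw [← TotalLabelling.logWeight_mul_vertexProd h.edge_le_two u (h.vertex_le_one u),
      ← TotalLabelling.logWeight_mul_vertexProd h.edge_le_two v (h.vertex_le_one v), heq]
end

section
/- For every n ≥ 2, the complete graph K_n admits an edge labelling ℓ : E(K_n) → {1,2} such that: (i) there exists an integer x ≥ 1 for which the subgraph induced by S_x contains exactly one edge and for every y ≠ x the set S_y is independent; and (ii) either no vertex of K_n has all its incident edges labelled 1, or no vertex of K_n has all its incident edges labelled 2. -/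
open Finset

def lab (n : ℕ) : Sym2 (Fin n) → ℕ :=
  Sym2.lift ⟨fun i j => if n ≤ i.val + j.val then 2 else 1,
    fun i j => by simp [Nat.add_comm]⟩

lemma lab_apply {n : ℕ} (u v : Fin n) :
    lab n s(u, v) = if n ≤ u.val + v.val then 2 else 1 := rfl

lemma incidence_top_eq {n : ℕ} (v : Fin n) :
    (⊤ : SimpleGraph (Fin n)).incidenceFinset v
      = (univ.erase v).image (fun u => s(u, v)) := by
  ext e
  induction e using Sym2.ind with
  | _ x y =>
    simp only [SimpleGraph.mem_incidenceFinset, SimpleGraph.incidenceSet,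
      SimpleGraph.mem_edgeSet, SimpleGraph.top_adj, Set.mem_setOf_eq,
      Sym2.mem_iff, Finset.mem_image, Finset.mem_erase, Finset.mem_univ,
      and_true, Sym2.eq_iff]
    constructor
    · rintro ⟨hxy, h | h⟩
      · subst h; exact ⟨y, fun h' => hxy h'.symm, Or.inr ⟨rfl, rfl⟩⟩
      · subst h; exact ⟨x, fun h' => hxy h', Or.inl ⟨rfl, rfl⟩⟩
    · rintro ⟨u, hu, ⟨h1, h2⟩ | ⟨h1, h2⟩⟩
      · subst h1; subst h2; exact ⟨fun h => hu h, Or.inr rfl⟩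
      · subst h1; subst h2; exact ⟨fun h => hu h.symm, Or.inl rfl⟩

lemma vertexProd_eq {n : ℕ} (ℓ : Sym2 (Fin n) → ℕ) (v : Fin n) :
    vertexProd ⊤ ℓ v = ∏ u ∈ univ.erase v, ℓ s(u, v) := by
  rw [vertexProd, incidence_top_eq, Finset.prod_image]
  intro a _ b _ h
  exact Sym2.congr_left.mp h

lemma card_ge (n t : ℕ) :
    ((univ : Finset (Fin n)).filter fun u => t ≤ u.val).card = n - t := by
  rw [← Nat.card_Ico t n]
  apply Finset.card_bij (fun u _ => u.val)
  · intro a ha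
    simp only [Finset.mem_filter, Finset.mem_univ, true_and] at ha
    exact Finset.mem_Ico.mpr ⟨ha, a.isLt⟩
  · intro a _ b _ h; exact Fin.val_injective h
  · intro m hm
    rw [Finset.mem_Ico] at hm
    exact ⟨⟨m, hm.2⟩, by simp [hm.1], rfl⟩

lemma prod_formula {n : ℕ} (v : Fin n) :
    vertexProd ⊤ (lab n) v = 2 ^ (if 2 * v.val < n then v.val else v.val - 1) := by
  rw [vertexProd_eq]
  simp only [lab_apply]
  rw [Finset.prod_ite, Finset.prod_const, Finset.prod_const, one_pow, mul_one]
  congr 1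
  have hvn : v.val < n := v.isLt
  have key : ((univ.erase v).filter fun u : Fin n => n ≤ u.val + v.val).card
      = if 2 * v.val < n then v.val else v.val - 1 := by
    have heq : ((univ.erase v).filter fun u : Fin n => n ≤ u.val + v.val)
        = ((univ : Finset (Fin n)).filter fun u => n - v.val ≤ u.val).erase v := by
      rw [← Finset.filter_erase]
      apply Finset.filter_congr
      intro u _
      constructor <;> intro h <;> omega
    rw [heq]
    by_cases hv : 2 * v.val < n
    · rw [Finset.erase_eq_of_notMem, card_ge, if_pos hv]
      · omega
      · simp only [Finset.mem_filter, Finset.mem_univ, true_and]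
        omega
    · rw [Finset.card_erase_of_mem, card_ge, if_neg hv]
      · omega
      · simp only [Finset.mem_filter, Finset.mem_univ, true_and]
        omega
  exact key

lemma collide {n : ℕ} {i j : ℕ} (hi : i < n) (hj : j < n)
    (h : (if 2 * i < n then i else i - 1) = (if 2 * j < n then j else j - 1))
    (hij : i ≠ j) :
    (i = (n + 1) / 2 - 1 ∧ j = (n + 1) / 2) ∨ (j = (n + 1) / 2 - 1 ∧ i = (n + 1) / 2) := by
  split_ifs at h <;> omega

lemma level_set {n : ℕ} (hn : 2 ≤ n) {m : ℕ} (hm : m < n)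
    (h : (if 2 * m < n then m else m - 1) = (n + 1) / 2 - 1) :
    m = (n + 1) / 2 - 1 ∨ m = (n + 1) / 2 := by
  split_ifs at h <;> omega

lemma collide' {n i j : ℕ} (hn : 2 ≤ n) (hi : i < n) (hj : j < n) (hij : i ≠ j)
    (h : (if 2 * i < n then i else i - 1) = (if 2 * j < n then j else j - 1)) :
    (if 2 * i < n then i else i - 1) = (n + 1) / 2 - 1 := by
  split_ifs at * <;> omega

/-- For every `n ≥ 2`, the complete graph `K_n` admits a `2`-labelling of its edges
such that (i) there exists `x ≥ 1` for which the subgraph induced by `S_x` contains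
exactly one edge while `S_y` is independent for every `y ≠ x`, and (ii) either no
vertex has all its incident edges labelled `1`, or no vertex has all its incident
edges labelled `2`. -/
theorem stmt_5 (n : ℕ) (hn : 2 ≤ n) :
    ∃ ℓ : Sym2 (Fin n) → ℕ,
      (∀ e ∈ (⊤ : SimpleGraph (Fin n)).edgeSet, ℓ e ∈ ({1, 2} : Set ℕ)) ∧
      (∃ x : ℕ, 1 ≤ x ∧
        -- the subgraph induced by `S_x` contains exactly one edge
        (∃! e : Sym2 (Fin n), e ∈ (⊤ : SimpleGraph (Fin n)).edgeSet ∧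
          ∀ v ∈ e, vertexProd ⊤ ℓ v = x) ∧
        -- `S_y` is independent for every `y ≠ x`
        (∀ y : ℕ, y ≠ x → ∀ u v : Fin n, (⊤ : SimpleGraph (Fin n)).Adj u v →
          ¬ (vertexProd ⊤ ℓ u = y ∧ vertexProd ⊤ ℓ v = y))) ∧
      -- no vertex sees only label 1, or no vertex sees only label 2
      ((¬ ∃ v : Fin n, ∀ e ∈ (⊤ : SimpleGraph (Fin n)).incidenceFinset v, ℓ e = 1) ∨
       (¬ ∃ v : Fin n, ∀ e ∈ (⊤ : SimpleGraph (Fin n)).incidenceFinset v, ℓ e = 2)) := by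
  set k := (n + 1) / 2 with hk
  have hk1 : k - 1 < n := by omega
  have hkn : k < n := by omega
  set a : Fin n := ⟨k - 1, hk1⟩ with ha
  set b : Fin n := ⟨k, hkn⟩ with hb
  have hab : a ≠ b := by
    intro h; apply_fun Fin.val at h; simp only [ha, hb] at h; omega
  have fa : vertexProd ⊤ (lab n) a = 2 ^ (k - 1) := by
    have h1 : a.val = k - 1 := rfl
    rw [prod_formula, h1, if_pos (by omega)]
  have fb : vertexProd ⊤ (lab n) b = 2 ^ (k - 1) := by
    have h1 : b.val = k := rfl
    rw [prod_formula, h1, if_neg (by omega)]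
  refine ⟨lab n, ?_, ⟨2 ^ (k - 1), Nat.one_le_two_pow, ⟨s(a, b), ⟨?_, ?_⟩, ?_⟩, ?_⟩, ?_⟩
  · -- labels in {1,2}
    intro e _
    induction e using Sym2.ind with
    | _ u v =>
      rw [lab_apply]
      split_ifs <;> simp
  · -- s(a,b) ∈ edgeSet
    rw [SimpleGraph.mem_edgeSet, SimpleGraph.top_adj]
    exact hab
  · -- both endpoints have product x
    intro v hv
    rw [Sym2.mem_iff] at hv
    rcases hv with rfl | rfl
    · exact fa
    · exact fb
  · -- uniqueness
    intro e
    induction e using Sym2.ind with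
    | _ u v =>
      rintro ⟨he, hpe⟩
      rw [SimpleGraph.mem_edgeSet, SimpleGraph.top_adj] at he
      have hu := hpe u (Sym2.mem_mk_left u v)
      have hv := hpe v (Sym2.mem_mk_right u v)
      rw [prod_formula] at hu hv
      have hu' := Nat.pow_right_injective le_rfl hu
      have hv' := Nat.pow_right_injective le_rfl hv
      have h1 := level_set hn u.isLt hu'
      have h2 := level_set hn v.isLt hv'
      have hne : u.val ≠ v.val := fun h => he (Fin.val_injective h)
      rw [Sym2.eq_iff]
      rcases h1 with h1 | h1 <;> rcases h2 with h2 | h2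
      · omega
      · exact Or.inl ⟨Fin.ext h1, Fin.ext h2⟩
      · exact Or.inr ⟨Fin.ext h1, Fin.ext h2⟩
      · omega
  · -- independence of other level sets
    intro y hy u v huv ⟨hu, hv⟩
    rw [SimpleGraph.top_adj] at huv
    apply hy
    rw [prod_formula] at hu hv
    have hne : u.val ≠ v.val := fun h => huv (Fin.val_injective h)
    have := collide' hn u.isLt v.isLt hne
      (Nat.pow_right_injective le_rfl (hu.trans hv.symm))
    rw [this] at hu
    exact hu.symm
  · -- no vertex sees only label 2
    right
    rintro ⟨v, hv⟩
    by_cases h0 : v.val = 0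
    · have hlt : (1 : ℕ) < n := by omega
      have hmem : s((⟨1, hlt⟩ : Fin n), v) ∈ (⊤ : SimpleGraph (Fin n)).incidenceFinset v := by
        rw [incidence_top_eq]
        refine Finset.mem_image.mpr ⟨⟨1, hlt⟩, Finset.mem_erase.mpr ⟨?_, Finset.mem_univ _⟩, rfl⟩
        intro h; subst h; exact absurd h0 one_ne_zero
      have := hv _ hmem
      rw [lab_apply, if_neg (by omega)] at this
      omega
    · have hlt : (0 : ℕ) < n := by omega
      have hmem : s((⟨0, hlt⟩ : Fin n), v) ∈ (⊤ : SimpleGraph (Fin n)).incidenceFinset v := by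
        rw [incidence_top_eq]
        refine Finset.mem_image.mpr ⟨⟨0, hlt⟩, Finset.mem_erase.mpr ⟨?_, Finset.mem_univ _⟩, rfl⟩
        intro h; subst h; exact h0 rfl
      have := hv _ hmem
      rw [lab_apply, if_neg (by simp only [Fin.val_mk, Nat.zero_add]; exact Nat.not_le.mpr v.isLt)] at this
      omega
end

section
/- Every finite connected bipartite graph G admits an edge labelling ℓ : E(G) → {1,2} for which there exists an integer x ≥ 1 such that all edges of the subgraph induced by S_x share a common endpoint (so this induced subgraph is a disjoint union of at most one star and isolated vertices), and for every integer y ≠ x the set S_y is an independent set of G. -/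
open Finset

open SimpleGraph

lemma path_edges_parity {V : Type*} [DecidableEq V] {G : SimpleGraph V} {a b : V}
    (p : G.Walk a b) (hp : p.IsPath) (u : V) :
    ((p.edges.filter (fun e => u ∈ e)).length : ZMod 2)
      = (if u = a then 1 else 0) + (if u = b then 1 else 0) := by
  induction p with
  | nil =>
    simp only [Walk.edges_nil, List.filter_nil, List.length_nil, Nat.cast_zero]
    split_ifs <;> first | decide | simp_all
  | @cons x y z hadj p ih =>
    rw [Walk.cons_isPath_iff] at hp
    have ih' := ih hp.1
    rw [Walk.edges_cons]
    by_cases hu : u ∈ (s(x, y) : Sym2 V)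
    · rw [List.filter_cons_of_pos (by simpa using hu)]
      simp only [List.length_cons, Nat.cast_add, Nat.cast_one, ih']
      rcases Sym2.mem_iff.mp hu with rfl | rfl
      · have hub : u ≠ z := fun h => hp.2 (h ▸ p.end_mem_support)
        have huy : u ≠ y := fun h => hp.2 (h ▸ p.start_mem_support)
        simp [hub, huy]
      · have hux : u ≠ x := hadj.ne'
        simp only [if_pos rfl, if_neg hux]
        split_ifs <;> ring_nf <;> decide
    · rw [List.filter_cons_of_neg (by simpa using hu)]
      rw [ih']
      have hux : u ≠ x := fun h => hu (h ▸ Sym2.mem_mk_left x y)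
      have huy : u ≠ y := fun h => hu (h ▸ Sym2.mem_mk_right x y)
      simp [hux, huy]

lemma incidence_filter_card {V : Type*} [Fintype V] [DecidableEq V] {G : SimpleGraph V}
    [DecidableRel G.Adj] {a b : V} (p : G.Walk a b) (hnd : p.edges.Nodup) (v : V) :
    ((G.incidenceFinset v).filter (fun e => e ∈ p.edges)).card
      = (p.edges.filter (fun e => v ∈ e)).length := by
  classical
  have h1 : (G.incidenceFinset v).filter (fun e => e ∈ p.edges)
      = (p.edges.filter (fun e => v ∈ e)).toFinset := by
    ext e
    simp only [Finset.mem_filter, SimpleGraph.mem_incidenceFinset, List.mem_toFinset,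
      List.mem_filter, SimpleGraph.mk'_mem_incidenceSet_iff]
    constructor
    · rintro ⟨he, hel⟩
      exact ⟨hel, by simpa using he.2⟩
    · rintro ⟨hel, hv⟩
      exact ⟨⟨p.edges_subset_edgeSet hel, by simpa using hv⟩, hel⟩
  rw [h1, List.toFinset_card_of_nodup (hnd.filter _)]

/-- Every finite connected bipartite graph `G` admits a `2`-labelling of its edges
for which there exists `x ≥ 1` such that all edges of the subgraph induced by `S_x`
share a common endpoint (so this subgraph is at most one star plus isolated
vertices), while `S_y` is independent for every `y ≠ x`. -/
theorem stmt_6 {V : Type*} [Fintype V] [DecidableEq V] (G : SimpleGraph V)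
    [DecidableRel G.Adj] (hconn : G.Connected) (hbip : G.Colorable 2) :
    ∃ ℓ : Sym2 V → ℕ,
      (∀ e ∈ G.edgeSet, ℓ e ∈ ({1, 2} : Set ℕ)) ∧
      ∃ x : ℕ, 1 ≤ x ∧
        -- all edges of the subgraph induced by `S_x` share a common endpoint `c`
        (∃ c : V, ∀ u v : V, G.Adj u v →
          vertexProd G ℓ u = x → vertexProd G ℓ v = x → u = c ∨ v = c) ∧
        -- `S_y` is independent for every `y ≠ x`
        (∀ y : ℕ, y ≠ x → ∀ u v : V, G.Adj u v →
          ¬ (vertexProd G ℓ u = y ∧ vertexProd G ℓ v = y)) := by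
  classical
  obtain ⟨r⟩ : Nonempty V := hconn.nonempty
  let C : G.Coloring (Fin 2) := hbip.some
  set odd : Finset V := (univ.filter (fun v => C v = 1)).erase r with hodd
  have hP : ∀ w : V, ∃ p : G.Walk w r, p.IsPath := fun w =>
    ⟨(((hconn.preconnected w r).some.toPath : G.Path w r) : G.Walk w r),
      ((hconn.preconnected w r).some.toPath : G.Path w r).2⟩
  choose P hPp using hP
  set g : Sym2 V → ZMod 2 := fun e => ∑ w ∈ odd, if e ∈ (P w).edges then 1 else 0 with hg
  set ℓ : Sym2 V → ℕ := fun e => if g e = 1 then 2 else 1 with hℓ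
  set N : V → ℕ := fun v => ((G.incidenceFinset v).filter (fun e => g e = 1)).card with hN
  have hprod : ∀ v, vertexProd G ℓ v = 2 ^ N v := by
    intro v
    rw [vertexProd, hℓ]
    simp only
    rw [Finset.prod_ite, Finset.prod_const, Finset.prod_const_one, mul_one]
  have hpar : ∀ v, v ≠ r → ((N v : ℕ) : ZMod 2) = if C v = 1 then 1 else 0 := by
    intro v hvr
    have hid : ∀ a : ZMod 2, (if a = 1 then (1 : ZMod 2) else 0) = a := by decide
    rw [hN]
    simp only
    rw [Finset.card_filter]
    push_cast
    have step1 : ∀ e ∈ G.incidenceFinset v,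
        (if g e = 1 then (1 : ZMod 2) else (0 : ZMod 2)) = g e := by
      intro e _; exact hid (g e)
    rw [Finset.sum_congr rfl step1, hg]
    rw [Finset.sum_comm]
    have step2 : ∀ w ∈ odd,
        (∑ e ∈ G.incidenceFinset v, if e ∈ (P w).edges then (1 : ZMod 2) else 0)
          = (if v = w then 1 else 0) := by
      intro w _
      have hcast : (∑ e ∈ G.incidenceFinset v, if e ∈ (P w).edges then (1 : ZMod 2) else 0)
          = ((((G.incidenceFinset v).filter (fun e => e ∈ (P w).edges)).card : ℕ) : ZMod 2) := by
        rw [Finset.card_filter]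
        push_cast
        rfl
      rw [hcast, incidence_filter_card (P w) (hPp w).isTrail.edges_nodup v,
        path_edges_parity (P w) (hPp w) v, if_neg hvr, add_zero]
    rw [Finset.sum_congr rfl step2, Finset.sum_ite_eq odd v (fun _ => (1 : ZMod 2))]
    have : v ∈ odd ↔ C v = 1 := by
      rw [hodd, Finset.mem_erase, Finset.mem_filter]
      simp [hvr]
    split_ifs with h1 h2 h2 <;> simp_all
  -- key inequality
  have hNC : ∀ u v : V, G.Adj u v → u ≠ r → v ≠ r → N u ≠ N v := by
    intro u v hadj hu hv hNe
    have h1 := hpar u hu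
    have h2 := hpar v hv
    rw [hNe, h2] at h1
    have hval := C.valid hadj
    have : ∀ a b : Fin 2, a ≠ b →
        (if a = 1 then (1 : ZMod 2) else 0) ≠ (if b = 1 then 1 else 0) := by decide
    exact this (C v) (C u) hval.symm h1
  refine ⟨ℓ, ?_, vertexProd G ℓ r, ?_, ⟨r, ?_⟩, ?_⟩
  · intro e _
    rw [hℓ]
    by_cases h : g e = 1 <;> simp [h]
  · rw [hprod r]; exact Nat.one_le_two_pow
  · intro u v hadj hu hv
    by_contra hcon
    push_neg at hcon
    have he : (2:ℕ) ^ N u = 2 ^ N v := by rw [← hprod u, ← hprod v, hu, hv]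
    exact hNC u v hadj hcon.1 hcon.2 (Nat.pow_right_injective (le_refl 2) he)
  · intro y hy u v hadj ⟨h1, h2⟩
    rcases eq_or_ne u r with rfl | hu
    · exact hy (h1 ▸ rfl)
    rcases eq_or_ne v r with rfl | hv
    · exact hy (h2 ▸ rfl)
    have he : (2:ℕ) ^ N u = 2 ^ N v := by rw [← hprod u, ← hprod v, h1, h2]
    exact hNC u v hadj hu hv (Nat.pow_right_injective (le_refl 2) he)
end

section
/- Every finite simple graph G with maximum degree at most 3 admits an edge labelling ℓ : E(G) → {1,2} such that for every integer x ≥ 1 the subgraph of G induced by the set S_x is a forest (contains no cycle). -/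
/-!
Colour the vertices by `c : V → ZMod 2` so as to minimise the number of monochromatic edges.
Flipping one vertex then cannot help, so every vertex has at most half of its neighbours in its
own colour: at most one when the degree is at most `3`, and every colour class induces a matching.

The labelling will realise `c` as the parity of the number of `2`-labels at each vertex, which
requires the colour sum of every connected component to vanish. In a component where it does
not, flip the colour of one vertex `r`; this creates a monochromatic cycle only if `r` lies in a
triangle whose other two vertices have the other colour, and if every vertex of the component
lies in such a triangle the component is a `K₄` coloured two and two, of even colour sum.

Now `c` is the boundary over `ZMod 2` of an edge set `F` (a `T`-join: add up walks from every
vertex of colour `1` to a fixed root of its component). Labelling the edges of `F` by `2` and the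
others by `1` gives `ρ(v) = 2 ^ deg_F v`, so every `S_x` lies in a single colour class of `c`.
-/

open Finset

namespace SimpleGraph

section Walks

variable {V : Type*} {G : SimpleGraph V}

lemma Walk.end_mem_of_adj_closed {S : Set V} (hS : ∀ a ∈ S, ∀ b, G.Adj a b → b ∈ S)
    {u w : V} (p : G.Walk u w) (hu : u ∈ S) : w ∈ S := by
  induction p with
  | nil => exact hu
  | cons h _ ih => exact ih (hS _ hu _ h)

lemma Walk.IsCycle.exists_triangle_or_cherry {v : V} {p : G.Walk v v} (hp : p.IsCycle) :
    (∃ a b, G.Adj v a ∧ G.Adj a b ∧ G.Adj b v ∧ a ∈ p.support ∧ b ∈ p.support) ∨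
    ∃ u a b, G.Adj u a ∧ G.Adj u b ∧ a ≠ b ∧ u ≠ v ∧ a ≠ v ∧ b ≠ v ∧
      u ∈ p.support ∧ a ∈ p.support ∧ b ∈ p.support := by
  have hlen := hp.three_le_length
  have hnd := hp.support_nodup
  rcases p with _ | ⟨h₁, _ | ⟨h₂, _ | ⟨h₃, _ | ⟨h₄, q⟩⟩⟩⟩
  iterate 3 simp at hlen
  · exact .inl ⟨_, _, h₁, h₂, h₃, by simp, by simp⟩
  · right
    simp only [Walk.support_cons, List.tail_cons, List.nodup_cons, List.mem_cons] at hnd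
    obtain ⟨ha, hb, hd, -⟩ := hnd
    refine ⟨_, _, _, h₂.symm, h₃, ?_, ?_, ?_, ?_, by simp, by simp, by simp⟩ <;> rintro rfl
    · exact ha (.inr (.inl rfl))
    · exact hb (.inr q.end_mem_support)
    · exact ha (.inr (.inr q.end_mem_support))
    · exact hd q.end_mem_support

lemma isAcyclic_induce_of_forall_isCycle {s : Set V}
    (h : ∀ v (p : G.Walk v v), p.IsCycle → (∀ u ∈ p.support, u ∈ s) → False) :
    (G.induce s).IsAcyclic := by
  intro v p hp
  let f := Embedding.induce (G := G) s
  refine h _ (p.map f.toHom) ((Walk.isCycle_map_iff_of_injective f.injective).mpr hp) fun u hu => ?_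
  obtain ⟨u', -, rfl⟩ := List.mem_map.mp (by simpa only [Walk.support_map] using hu)
  exact u'.2

end Walks

section Finite

open Matrix

variable {V : Type*} [Fintype V] [DecidableEq V] {G : SimpleGraph V} [DecidableRel G.Adj]

lemma neighborFinset_eq_of_degree_le_three {z a b d : V} (hz : G.degree z ≤ 3)
    (ha : G.Adj z a) (hb : G.Adj z b) (hd : G.Adj z d) (hab : a ≠ b) (had : a ≠ d)
    (hbd : b ≠ d) : G.neighborFinset z = {a, b, d} := by
  refine (eq_of_subset_of_card_le (by simp [insert_subset_iff, ha, hb, hd]) ?_).symm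
  rw [card_neighborFinset_eq_degree, card_insert_of_notMem (by simp [hab, had]), card_pair hbd]
  exact hz

variable (G) in
def monoDegree (c : V → ZMod 2) (v : V) : ℕ := #{e ∈ G.incidenceFinset v | (e.map c).IsDiag}

variable (G) in
def monoEdgeCount (c : V → ZMod 2) : ℕ := #{e ∈ G.edgeFinset | (e.map c).IsDiag}

lemma monoEdgeCount_add_single (c : V → ZMod 2) (v : V) :
    G.monoEdgeCount (c + Pi.single v 1) + 2 * G.monoDegree c v =
      G.monoEdgeCount c + G.degree v := by
  have hflip : ∀ e ∈ G.incidenceFinset v,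
      (e.map (c + Pi.single v 1)).IsDiag ↔ ¬(e.map c).IsDiag := by
    intro e he
    rw [mem_incidenceFinset] at he
    obtain ⟨w, rfl⟩ := Sym2.mem_iff_exists.mp he.2
    have hwv : w ≠ v := (G.ne_of_adj he.1).symm
    simp [Pi.single_eq_of_ne hwv, (by decide : ∀ a b : ZMod 2, a + 1 = b ↔ a ≠ b)]
  have hkeep : ∀ e ∈ G.edgeFinset \ G.incidenceFinset v,
      (e.map (c + Pi.single v 1)).IsDiag ↔ (e.map c).IsDiag := by
    intro e he
    refine iff_of_eq (congrArg _ (Sym2.map_congr fun u hu => ?_))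
    have huv : u ≠ v := by
      rintro rfl
      simp only [mem_sdiff, mem_edgeFinset, mem_incidenceFinset] at he
      exact he.2 ⟨he.1, hu⟩
    simp [Pi.single_eq_of_ne huv]
  have hsplit : ∀ c' : V → ZMod 2, G.monoEdgeCount c' =
      #{e ∈ G.edgeFinset \ G.incidenceFinset v | (e.map c').IsDiag} +
        #{e ∈ G.incidenceFinset v | (e.map c').IsDiag} := by
    intro c'
    rw [monoEdgeCount, ← card_union_of_disjoint (disjoint_filter_filter sdiff_disjoint),
      ← filter_union, sdiff_union_of_subset (G.incidenceFinset_subset v)]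
  have hdeg := card_filter_add_card_filter_not (s := G.incidenceFinset v)
    (fun e => (e.map c).IsDiag)
  rw [card_incidenceFinset_eq_degree] at hdeg
  rw [hsplit, hsplit, filter_congr hkeep, filter_congr hflip, monoDegree]
  omega

variable (G) in
lemma exists_two_mul_monoDegree_le :
    ∃ c : V → ZMod 2, ∀ v, 2 * G.monoDegree c v ≤ G.degree v := by
  obtain ⟨c, hc⟩ := Finite.exists_min (monoEdgeCount G)
  refine ⟨c, fun v => ?_⟩
  have := hc (c + Pi.single v 1)
  have := monoEdgeCount_add_single (G := G) c v
  omega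

lemma eq_of_monoDegree_le_one {c : V → ZMod 2} {u a b : V} (hu : G.monoDegree c u ≤ 1)
    (ha : G.Adj u a) (hb : G.Adj u b) (hca : c a = c u) (hcb : c b = c u) : a = b := by
  by_contra hab
  have hsub : {s(u, a), s(u, b)} ⊆ {e ∈ G.incidenceFinset u | (e.map c).IsDiag} := by
    simp [insert_subset_iff, mem_incidenceFinset, ha, hb, hca, hcb]
  have := card_le_card hsub
  rw [card_pair fun h => hab (Sym2.congr_right.mp h)] at this
  exact absurd (this.trans hu) (by norm_num)

variable (G) in
/-- Flipping the colour of `r` can only create a monochromatic cycle through a triangle at `r`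
whose two other vertices carry the other colour. -/
def IsFlippable (c : V → ZMod 2) (r : V) : Prop :=
  ¬∃ a b, G.Adj r a ∧ G.Adj r b ∧ G.Adj a b ∧ c a = c r + 1 ∧ c b = c r + 1

lemma not_forall_eq_of_isCycle {c : V → ZMod 2} (hc : ∀ u, G.monoDegree c u ≤ 1) {v : V}
    {p : G.Walk v v} (hp : p.IsCycle) : ¬∀ u ∈ p.support, c u = c v := by
  intro hmono
  rcases hp.exists_triangle_or_cherry with
    ⟨a, b, hva, hab, hbv, ha, hb⟩ | ⟨u, a, b, hua, hub, hab, -, -, -, hu, ha, hb⟩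
  · exact hab.ne (eq_of_monoDegree_le_one (hc v) hva hbv.symm (hmono a ha) (hmono b hb))
  · exact hab (eq_of_monoDegree_le_one (hc u) hua hub
      ((hmono a ha).trans (hmono u hu).symm) ((hmono b hb).trans (hmono u hu).symm))

lemma not_forall_add_single_eq_of_isCycle {c : V → ZMod 2} (hc : ∀ u, G.monoDegree c u ≤ 1)
    {r : V} (hr : G.IsFlippable c r) {v : V} {p : G.Walk v v} (hp : p.IsCycle) :
    ¬∀ u ∈ p.support,
      (c + Pi.single r 1 : V → ZMod 2) u = (c + Pi.single r 1 : V → ZMod 2) v := by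
  intro hmono
  by_cases hrp : r ∈ p.support
  · have hcol : ∀ u ∈ (p.rotate r hrp).support, u ≠ r → c u = c r + 1 := by
      intro u hu hur
      have := (hmono u ((p.mem_support_rotate_iff r hrp).mp hu)).trans (hmono r hrp).symm
      simpa [Pi.single_eq_of_ne hur] using this
    rcases (hp.rotate hrp).exists_triangle_or_cherry with
      ⟨a, b, hra, hab, hbr, ha, hb⟩ | ⟨u, a, b, hua, hub, hab, hur, har, hbr, hu, ha, hb⟩
    · exact hr ⟨a, b, hra, hbr.symm, hab, hcol a ha hra.ne', hcol b hb hbr.ne⟩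
    · exact hab (eq_of_monoDegree_le_one (hc u) hua hub
        ((hcol a ha har).trans (hcol u hu hur).symm) ((hcol b hb hbr).trans (hcol u hu hur).symm))
  · refine not_forall_eq_of_isCycle hc hp fun u hu => ?_
    have hur : u ≠ r := fun h => hrp (h ▸ hu)
    have hvr : v ≠ r := fun h => hrp (h ▸ p.start_mem_support)
    simpa [Pi.single_eq_of_ne hur, Pi.single_eq_of_ne hvr] using hmono u hu

lemma exists_adj_adj_of_not_isFlippable {c : V → ZMod 2} {a v b : V} (hdeg : G.degree a ≤ 3)
    (ha : ¬G.IsFlippable c a) (hva : G.Adj v a) (hab : G.Adj a b)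
    (hcv : c v = c a + 1) (hcb : c b = c a) :
    ∃ x, G.Adj a x ∧ G.Adj v x ∧ c x = c v := by
  obtain ⟨w₁, w₂, hw₁, hw₂, hw, hcw₁, hcw₂⟩ := not_not.mp ha
  have hv : v = w₁ ∨ v = w₂ := by
    by_contra! hvw
    have hN := neighborFinset_eq_of_degree_le_three hdeg hva.symm hw₁ hw₂ hvw.1 hvw.2 hw.ne
    have hb : b ∈ G.neighborFinset a := (mem_neighborFinset _ _ _).mpr hab
    have hcb' : c b = c a + 1 := by
      simp only [hN, mem_insert, mem_singleton] at hb
      rcases hb with rfl | rfl | rfl <;> assumption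
    simp [hcb] at hcb'
  rcases hv with rfl | rfl
  · exact ⟨w₂, hw₂, hw, hcw₂.trans hcv.symm⟩
  · exact ⟨w₁, hw₁, hw.symm, hcw₁.trans hcv.symm⟩

lemma ConnectedComponent.supp_toFinset_eq_of_four_clique (hdeg : ∀ v, G.degree v ≤ 3)
    {K : G.ConnectedComponent} {v a b x : V} (hv : v ∈ K.supp) (hva : G.Adj v a)
    (hvb : G.Adj v b) (hvx : G.Adj v x) (hab : G.Adj a b) (hax : G.Adj a x) (hbx : G.Adj b x) :
    K.supp.toFinset = {v, a, b, x} := by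
  have hclosed :
      ∀ z ∈ ({v, a, b, x} : Set V), ∀ w, G.Adj z w → w ∈ ({v, a, b, x} : Set V) := by
    intro z hz w hzw
    rw [← mem_neighborFinset] at hzw
    simp only [Set.mem_insert_iff, Set.mem_singleton_iff] at hz ⊢
    rcases hz with rfl | rfl | rfl | rfl
    · rw [neighborFinset_eq_of_degree_le_three (hdeg _) hva hvb hvx hab.ne hax.ne hbx.ne] at hzw
      simp only [mem_insert, mem_singleton] at hzw; tauto
    · rw [neighborFinset_eq_of_degree_le_three (hdeg _) hva.symm hab hax hvb.ne hvx.ne hbx.ne]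
        at hzw
      simp only [mem_insert, mem_singleton] at hzw; tauto
    · rw [neighborFinset_eq_of_degree_le_three (hdeg _) hvb.symm hab.symm hbx hva.ne hvx.ne hax.ne]
        at hzw
      simp only [mem_insert, mem_singleton] at hzw; tauto
    · rw [neighborFinset_eq_of_degree_le_three (hdeg _) hvx.symm hax.symm hbx.symm hva.ne hvb.ne
        hab.ne] at hzw
      simp only [mem_insert, mem_singleton] at hzw; tauto
  ext w
  simp only [Set.mem_toFinset, mem_insert, mem_singleton]
  constructor
  · intro hw
    obtain ⟨p⟩ := ConnectedComponent.exact (hv.trans hw.symm)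
    simpa using p.end_mem_of_adj_closed hclosed (by simp)
  · rintro (rfl | rfl | rfl | rfl)
    exacts [hv, (K.mem_supp_congr_adj hva).mp hv, (K.mem_supp_congr_adj hvb).mp hv,
      (K.mem_supp_congr_adj hvx).mp hv]

/-- If no vertex of `K` is flippable, then `K` is a `K₄` coloured two and two. -/
lemma exists_isFlippable (hdeg : ∀ v, G.degree v ≤ 3) (c : V → ZMod 2)
    (K : G.ConnectedComponent) (hK : ∑ v ∈ K.supp.toFinset, c v ≠ 0) :
    ∃ r ∈ K.supp, G.IsFlippable c r := by
  by_contra! hbad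
  obtain ⟨v, hv⟩ := K.nonempty_supp
  obtain ⟨a, b, hva, hvb, hab, hca, hcb⟩ := not_not.mp (hbad v hv)
  have haK : a ∈ K.supp := (K.mem_supp_congr_adj hva).mp hv
  have hbK : b ∈ K.supp := (K.mem_supp_congr_adj hvb).mp hv
  have hcva : c v = c a + 1 := by rw [hca]; ring_nf; reduce_mod_char
  have hcvb : c v = c b + 1 := by rw [hcb]; ring_nf; reduce_mod_char
  obtain ⟨x, hax, hvx, hcx⟩ := exists_adj_adj_of_not_isFlippable (hdeg a) (hbad a haK) hva
    hab hcva (hcb.trans hca.symm)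
  obtain ⟨y, hby, hvy, hcy⟩ := exists_adj_adj_of_not_isFlippable (hdeg b) (hbad b hbK) hvb
    hab.symm hcvb (hca.trans hcb.symm)
  have hyx : y = x := by
    have hy : y ∈ G.neighborFinset v := (mem_neighborFinset _ _ _).mpr hvy
    rw [neighborFinset_eq_of_degree_le_three (hdeg v) hva hvb hvx hab.ne
      (fun h => by simp [h, hcx] at hca) (fun h => by simp [h, hcx] at hcb)] at hy
    simp only [mem_insert, mem_singleton] at hy
    rcases hy with rfl | rfl | rfl
    · simp [hcy] at hca
    · simp [hcy] at hcb
    · rfl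
  subst hyx
  apply hK
  rw [ConnectedComponent.supp_toFinset_eq_of_four_clique hdeg hv hva hvb hvx hab hax hby,
    sum_insert (by simp [hva.ne, hvb.ne, hvx.ne]), sum_insert (by simp [hab.ne, hax.ne]),
    sum_pair hby.ne, hca, hcb, hcx]
  ring_nf
  reduce_mod_char

theorem exists_coloring_isAcyclic_of_degree_le_three (hdeg : ∀ v, G.degree v ≤ 3) :
    ∃ c : V → ZMod 2, (∀ i, (G.induce {v | c v = i}).IsAcyclic) ∧
      ∀ K : G.ConnectedComponent, ∑ v ∈ K.supp.toFinset, c v = 0 := by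
  obtain ⟨c, hc⟩ := exists_two_mul_monoDegree_le G
  replace hc : ∀ v, G.monoDegree c v ≤ 1 := fun v => by have := hc v; have := hdeg v; omega
  let σ : G.ConnectedComponent → ZMod 2 := fun K => ∑ v ∈ K.supp.toFinset, c v
  have hroot : ∀ K, ∃ r ∈ K.supp, σ K ≠ 0 → G.IsFlippable c r := by
    intro K
    by_cases hK : σ K = 0
    · obtain ⟨r, hr⟩ := K.nonempty_supp
      exact ⟨r, hr, absurd hK⟩
    · obtain ⟨r, hr, hflip⟩ := exists_isFlippable hdeg c K hK
      exact ⟨r, hr, fun _ => hflip⟩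
  choose root hroot hflip using hroot
  let c' : V → ZMod 2 := fun v =>
    c v + if v = root (G.connectedComponentMk v) then σ (G.connectedComponentMk v) else 0
  have hc' : ∀ K, ∀ v ∈ K.supp, c' v = c v + if v = root K then σ K else 0 := by
    rintro K v rfl
    rfl
  refine ⟨c', fun i => isAcyclic_induce_of_forall_isCycle fun v p hp hi => ?_, fun K => ?_⟩
  · let K := G.connectedComponentMk v
    have hK : ∀ u ∈ p.support, u ∈ K.supp := fun u hu =>
      (ConnectedComponent.sound ⟨p.takeUntil u hu⟩).symm
    have hmono : ∀ u ∈ p.support, c' u = c' v := fun u hu =>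
      (hi u hu).trans (hi v p.start_mem_support).symm
    rcases (by decide : ∀ z : ZMod 2, z = 0 ∨ z = 1) (σ K) with h | h
    · refine not_forall_eq_of_isCycle hc hp fun u hu => ?_
      simpa [hc' K u (hK u hu), hc' K v rfl, h] using hmono u hu
    · refine not_forall_add_single_eq_of_isCycle hc (hflip K (h ▸ one_ne_zero)) hp
        fun u hu => ?_
      simpa [hc' K u (hK u hu), hc' K v rfl, h, Pi.single_apply] using hmono u hu
  · rw [sum_congr rfl fun v hv => hc' K v (Set.mem_toFinset.mp hv), sum_add_distrib,
      sum_ite_eq' _ _ _, if_pos (Set.mem_toFinset.mpr (hroot K)), ZModModule.add_self]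

lemma incMatrix_mulVec_apply {R : Type*} [NonAssocSemiring R] (F : Sym2 V → R) (v : V) :
    (G.incMatrix R *ᵥ F) v = ∑ e ∈ G.incidenceFinset v, F e := by
  simp_rw [Matrix.mulVec, dotProduct, incMatrix_apply', ite_mul, one_mul, zero_mul, ← sum_filter]
  congr 1
  ext e
  simp

lemma single_add_single_mem_range_incMatrix {u w : V} (h : G.Reachable u w) :
    Pi.single u 1 + Pi.single w 1 ∈ LinearMap.range (G.incMatrix (ZMod 2)).mulVecLin := by
  obtain ⟨p⟩ := h
  induction p with
  | nil => rw [ZModModule.add_self]; exact zero_mem _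
  | @cons u a w hua p ih =>
    have hedge :
        Pi.single u 1 + Pi.single a 1 = G.incMatrix (ZMod 2) *ᵥ Pi.single s(u, a) 1 := by
      ext v
      simp only [Matrix.mulVec_single_one, Matrix.col_apply, incMatrix_apply',
        mk'_mem_incidenceSet_iff]
      by_cases hvu : v = u <;> by_cases hva : v = a <;> simp_all [hua.ne]
    have hsplit : (Pi.single u 1 + Pi.single w 1 : V → ZMod 2) =
        (Pi.single u 1 + Pi.single a 1) + (Pi.single a 1 + Pi.single w 1) := by
      rw [add_assoc, ← add_assoc (Pi.single a 1), ZModModule.add_self, zero_add]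
    rw [hsplit]
    exact add_mem ⟨_, hedge.symm⟩ ih

theorem exists_incMatrix_mulVec_eq {t : V → ZMod 2}
    (ht : ∀ K : G.ConnectedComponent, ∑ v ∈ K.supp.toFinset, t v = 0) :
    ∃ F, G.incMatrix (ZMod 2) *ᵥ F = t := by
  classical
  choose root hroot using fun K : G.ConnectedComponent => K.nonempty_supp
  -- Join every vertex to the root of its component: by `ht` the roots cancel.
  have hroots : ∑ u, t u • Pi.single (root (G.connectedComponentMk u)) (1 : ZMod 2) = 0 := by
    rw [← sum_fiberwise univ G.connectedComponentMk]
    refine sum_eq_zero fun K _ => ?_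
    rw [sum_congr rfl fun u hu => by rw [(mem_filter.mp hu).2], ← sum_smul]
    have : univ.filter (G.connectedComponentMk · = K) = K.supp.toFinset := by ext; simp
    rw [this, ht, zero_smul]
  have ht' :
      t = ∑ u, t u • (Pi.single u 1 + Pi.single (root (G.connectedComponentMk u)) 1) := by
    simp_rw [smul_add, sum_add_distrib, hroots, add_zero, ← Pi.single_smul, smul_eq_mul, mul_one,
      univ_sum_single]
  obtain ⟨F, hF⟩ : t ∈ LinearMap.range (G.incMatrix (ZMod 2)).mulVecLin := ht' ▸
    sum_mem fun u _ => Submodule.smul_mem _ _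
      (single_add_single_mem_range_incMatrix (ConnectedComponent.exact (hroot _).symm))
  exact ⟨F, hF⟩

end Finite

end SimpleGraph

open Matrix in
lemma natCast_log_vertexProd {V : Type*} [Fintype V] [DecidableEq V] (G : SimpleGraph V)
    [DecidableRel G.Adj] (F : Sym2 V → ZMod 2) (v : V) :
    (Nat.log 2 (vertexProd G (fun e => 2 ^ (F e).val) v) : ZMod 2) =
      (G.incMatrix (ZMod 2) *ᵥ F) v := by
  rw [vertexProd, prod_pow_eq_pow_sum, Nat.log_pow one_lt_two, Nat.cast_sum,
    SimpleGraph.incMatrix_mulVec_apply]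
  simp

/-- Every finite simple graph `G` with maximum degree at most `3` admits a
`2`-labelling of its edges such that for every `x ≥ 1` the subgraph of `G` induced
by `S_x = {v | ρ(v) = x}` is a forest. -/
theorem stmt_8 {V : Type*} [Fintype V] [DecidableEq V] (G : SimpleGraph V)
    [DecidableRel G.Adj] (hdeg : ∀ v : V, G.degree v ≤ 3) :
    ∃ ℓ : Sym2 V → ℕ,
      (∀ e ∈ G.edgeSet, ℓ e ∈ ({1, 2} : Set ℕ)) ∧
      ∀ x : ℕ, 1 ≤ x →
        (G.induce {v : V | vertexProd G ℓ v = x}).IsAcyclic := by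
  obtain ⟨c, hforest, hsum⟩ := SimpleGraph.exists_coloring_isAcyclic_of_degree_le_three hdeg
  obtain ⟨F, hF⟩ := SimpleGraph.exists_incMatrix_mulVec_eq hsum
  refine ⟨fun e => 2 ^ (F e).val, fun e _ => ?_, fun x _ => ?_⟩
  · simp only [Set.mem_insert_iff, Set.mem_singleton_iff]
    generalize F e = z
    revert z
    decide
  · refine (hforest (Nat.log 2 x : ZMod 2)).embedding (G.induceHomOfLE fun v hv => ?_)
    obtain rfl : vertexProd G _ v = x := hv
    exact (natCast_log_vertexProd G F v).trans (congrFun hF v) |>.symm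
end
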